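/- arXiv:1911.01479 — 3 statements merged into one kernel-verified Lean document; each statement's English description precedes it below -/
import Mathlib

section
/- Let f : ℤ_m^n → ℤ_m be a function that is not identically zero. Then there exists a tuple a ∈ ℤ_m^n with f(a) ≠ 0 such that, letting S = { i : aᵢ ≠ 0 }, the restricted function g : ℤ_m^S → ℤ_m defined by setting all coordinates outside S to 0 (g(y) = f(x) where xᵢ = yᵢ for i ∈ S and xᵢ = 0 otherwise) is 0-absorbing and nonconstant (provided S is nonempty; if S is empty then f(0,…,0) ≠ 0). -/
/-- If f is not identically zero, there is a witness a with f(a) ≠ 0 such that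
restricting f to the support S of a (setting variables outside S to 0) yields
a nonconstant 0-absorbing function (when S is nonempty; if S is empty then
f(0,…,0) ≠ 0). -/
theorem stmt_9 (m n : ℕ) (f : (Fin n → ZMod m) → ZMod m)
    (hf : ∃ x, f x ≠ 0) :
    ∃ a : Fin n → ZMod m, f a ≠ 0 ∧
      (((∃ i, a i ≠ 0) →
        ((∀ x : Fin n → ZMod m,
            (∃ i, a i ≠ 0 ∧ x i = 0) →
            f (fun i => if a i ≠ 0 then x i else 0) = 0) ∧
          (∃ x y : Fin n → ZMod m,
            f (fun i => if a i ≠ 0 then x i else 0) ≠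
            f (fun i => if a i ≠ 0 then y i else 0)))) ∧
        ((∀ i, a i = 0) → f (fun _ => 0) ≠ 0)) := by
  classical
  set Z : (Fin n → ZMod m) → ℕ :=
    fun a => (Finset.univ.filter (fun i => a i = 0)).card with hZ
  have hZle : ∀ a, Z a ≤ n := by
    intro a
    simpa using (Finset.card_filter_le Finset.univ (fun i => a i = 0))
  set P : ℕ → Prop := fun k => ∃ a, f a ≠ 0 ∧ k ≤ Z a with hP
  set k : ℕ := Nat.findGreatest P n with hk
  obtain ⟨a₀, ha₀⟩ := hf
  have hPk : P k := Nat.findGreatest_spec (Nat.zero_le n) ⟨a₀, ha₀, Nat.zero_le _⟩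
  obtain ⟨a, hfa, hka⟩ := hPk
  have hmax : ∀ b, f b ≠ 0 → Z b ≤ k := by
    intro b hb
    exact Nat.le_findGreatest (hZle b) ⟨b, hb, le_refl _⟩
  refine ⟨a, hfa, ?_, ?_⟩
  · intro _
    have habs : ∀ x : Fin n → ZMod m,
        (∃ i, a i ≠ 0 ∧ x i = 0) →
        f (fun i => if a i ≠ 0 then x i else 0) = 0 := by
      intro x ⟨i, hai, hxi⟩
      set b : Fin n → ZMod m := fun j => if a j ≠ 0 then x j else 0 with hb
      by_contra hfb
      have hsub : (Finset.univ.filter (fun j => a j = 0)) ⊂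
          (Finset.univ.filter (fun j => b j = 0)) := by
        constructor
        · intro j hj
          simp only [Finset.mem_filter, Finset.mem_univ, true_and] at hj ⊢
          simp [hb, hj]
        · intro hcon
          have hi : i ∈ Finset.univ.filter (fun j => b j = 0) := by
            simp only [Finset.mem_filter, Finset.mem_univ, true_and]
            simp [hb, hai, hxi]
          have := hcon hi
          simp only [Finset.mem_filter, Finset.mem_univ, true_and] at this
          exact hai this
      have hlt : Z a < Z b := Finset.card_lt_card hsub
      have := hmax b hfb
      omega
    refine ⟨habs, a, 0, ?_⟩
    have h1 : (fun i => if a i ≠ 0 then a i else 0) = a := by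
      funext i
      by_cases h : a i = 0 <;> simp [h]
    obtain ⟨i, hai⟩ := ‹∃ i, a i ≠ 0›
    have h2 := habs 0 ⟨i, hai, rfl⟩
    simp only [Pi.zero_apply] at h2
    simpa only [h1, Pi.zero_apply, h2] using hfa
  · intro h
    have : (fun _ : Fin n => (0 : ZMod m)) = a := by
      funext i; exact (h i).symm
    rw [this]; exact hfa
end

section
/- Let f : ℤ_m^n → ℤ_m and let k ≤ n. Suppose that for every nonempty subset S ⊆ {1,…,n} with |S| > k, the function obtained from f by setting all variables outside S to 0 is not a nonconstant 0-absorbing function in the variables of S. Then f is identically zero if and only if f(a) = 0 for every tuple a ∈ ℤ_m^n with at most k nonzero coordinates. -/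
/-- If no restriction of f to a set S of more than k variables (other
variables set to 0) is nonconstant and 0-absorbing, then f is identically
zero iff it vanishes on all tuples with at most k nonzero coordinates. -/
theorem stmt_10 (m n k : ℕ) (hk : k ≤ n) (f : (Fin n → ZMod m) → ZMod m)
    (hyp : ∀ S : Finset (Fin n), S.Nonempty → k < S.card →
      ¬ ((∀ x : Fin n → ZMod m, (∃ i ∈ S, x i = 0) →
            f (fun i => if i ∈ S then x i else 0) = 0) ∧
         (∃ x y : Fin n → ZMod m,
            f (fun i => if i ∈ S then x i else 0) ≠
            f (fun i => if i ∈ S then y i else 0)))) :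
    (∀ x, f x = 0) ↔
      (∀ a : Fin n → ZMod m,
        (Finset.univ.filter (fun i => a i ≠ 0)).card ≤ k → f a = 0) := by
  constructor
  · intro h a _; exact h a
  · intro h
    have key : ∀ c : ℕ, ∀ a : Fin n → ZMod m,
        (Finset.univ.filter (fun i => a i ≠ 0)).card ≤ c → f a = 0 := by
      intro c
      induction c using Nat.strong_induction_on with
      | _ c ih =>
        intro a hc
        by_cases hck : (Finset.univ.filter (fun i => a i ≠ 0)).card ≤ k
        · exact h a hck
        · push_neg at hck
          set S := Finset.univ.filter (fun i => a i ≠ 0) with hS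
          have hSne : S.Nonempty := Finset.card_pos.mp (lt_of_le_of_lt (Nat.zero_le k) hck)
          have habs : ∀ x : Fin n → ZMod m, (∃ i ∈ S, x i = 0) →
              f (fun i => if i ∈ S then x i else 0) = 0 := by
            intro x ⟨i, hiS, hxi⟩
            apply ih (S.card - 1) (by omega)
            apply le_trans (Finset.card_le_card _) (Finset.card_erase_of_mem hiS).le
            intro j hj
            simp only [Finset.mem_filter, Finset.mem_univ, true_and] at hj
            rw [Finset.mem_erase]
            by_cases hjS : j ∈ S
            · refine ⟨?_, hjS⟩
              rintro rfl
              simp [hjS, hxi] at hj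
            · simp [hjS] at hj
          have hconst := hyp S hSne hck
          rw [not_and_or] at hconst
          rcases hconst with hc1 | hc2
          · exact absurd habs hc1
          · push_neg at hc2
            have ha : (fun i => if i ∈ S then a i else 0) = a := by
              funext i
              by_cases hi : i ∈ S
              · simp [hi]
              · simp only [hS, Finset.mem_filter, Finset.mem_univ, true_and,
                  not_not] at hi
                simp [hi]
            have h0 : f (fun i => if i ∈ S then (0 : Fin n → ZMod m) i else 0) = 0 := by
              have : (fun i => if i ∈ S then (0 : Fin n → ZMod m) i else 0)
                  = (0 : Fin n → ZMod m) := by funext i; simp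
              rw [this]
              apply h
              simp
            calc f a = f (fun i => if i ∈ S then a i else 0) := by rw [ha]
              _ = f (fun i => if i ∈ S then (0 : Fin n → ZMod m) i else 0) := hc2 a 0
              _ = 0 := h0
    intro x
    exact key (Finset.univ.filter (fun i => x i ≠ 0)).card x le_rfl
end

section
/- Let m > 2 and let f : ℤ_m^n → ℤ_m be nonconstant and 0-absorbing. Then there exists a ∈ (ℤ_m ∖ {0})^n such that the function g(x₁,…,xₙ) = f(a₁x₁,…,aₙxₙ) is 0-absorbing and satisfies g(1,1,…,1) ≠ 0; consequently the Boolean function AND_n is obtained as h(x) = [g(x) = g(1,…,1)] restricted to {0,1}^n, i.e., h(x₁,…,xₙ) = 1 iff x₁ = ⋯ = xₙ = 1 for x ∈ {0,1}^n. -/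
/-- From a nonconstant 0-absorbing f : ℤ_m^n → ℤ_m (m > 2) one obtains, after
scaling the variables by nonzero constants a, a 0-absorbing g with
g(1,…,1) ≠ 0, and the indicator h(x) = [g(x) = g(1,…,1)] computes AND on
{0,1}^n. -/
theorem stmt_18 (m n : ℕ) (hm : 2 < m) (f : (Fin n → ZMod m) → ZMod m)
    (habs : ∀ x : Fin n → ZMod m, (∃ i, x i = 0) → f x = 0)
    (hnc : ∃ x y : Fin n → ZMod m, f x ≠ f y) :
    ∃ a : Fin n → ZMod m, (∀ i, a i ≠ 0) ∧
      (∀ x : Fin n → ZMod m, (∃ i, x i = 0) →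
        f (fun i => a i * x i) = 0) ∧
      f (fun i => a i * 1) ≠ 0 ∧
      (∀ x : Fin n → ZMod m, (∀ i, x i = 0 ∨ x i = 1) →
        ((if f (fun i => a i * x i) = f (fun i => a i * 1)
            then (1 : ZMod m) else 0) = 1 ↔ ∀ i, x i = 1)) := by
  have hm0 : (1 : ZMod m) ≠ 0 := by
    haveI : Fact (1 < m) := ⟨by omega⟩
    exact one_ne_zero
  -- find a with f a ≠ 0
  obtain ⟨x, y, hxy⟩ := hnc
  have : ∃ a, f a ≠ 0 := by
    by_cases hx : f x = 0
    · exact ⟨y, fun hy => hxy (hx.trans hy.symm)⟩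
    · exact ⟨x, hx⟩
  obtain ⟨a, ha⟩ := this
  have hane : ∀ i, a i ≠ 0 := by
    intro i hi
    exact ha (habs a ⟨i, hi⟩)
  have hfa : f (fun i => a i * 1) ≠ 0 := by
    simpa using ha
  refine ⟨a, hane, ?_, hfa, ?_⟩
  · intro x ⟨i, hi⟩
    exact habs _ ⟨i, by simp [hi]⟩
  · intro x hx
    constructor
    · intro h
      by_contra hall
      push_neg at hall
      obtain ⟨i, hi⟩ := hall
      have hx0 : x i = 0 := (hx i).resolve_right hi
      have h0 : f (fun i => a i * x i) = 0 := habs _ ⟨i, by simp [hx0]⟩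
      split_ifs at h with hc
      · exact hfa (hc ▸ h0)
      · exact hm0 h.symm
    · intro h
      have : (fun i => a i * x i) = fun i => a i * 1 := by
        funext i; rw [h i]
      rw [this, if_pos rfl]
end
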